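/- arXiv:2605.04826 — 2 statements merged into one kernel-verified Lean document; each statement's English description precedes it below -/
import Mathlib

section
/- Let S[0] ≤ S[1] ≤ … ≤ S[N−1] with N ≥ 2 be a lexicographically nondecreasing list of strings. Set L[0] = L[N] = 0 and L[i] = LCP(S[i−1],S[i]) for 1 ≤ i ≤ N−1, and define M[i] = max(L[i],L[i+1]) for 0 ≤ i ≤ N−1. Then: (a) for every i, max_{j ≠ i} LCP(S[i],S[j]) = M[i]; (b) a string P is a prefix of exactly one element of the list if and only if there exists an index i such that P is a prefix of S[i] and M[i] < |P| ≤ |S[i]|; consequently, a string that is a prefix of exactly one list element exists if and only if M[i] < |S[i]| for some i, and in that case the minimum length of such a string equals min{M[i]+1 : 0 ≤ i ≤ N−1, M[i] < |S[i]|}. -/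
/-- Length of the longest common prefix of two strings (lists). -/
def lcp {α : Type*} [DecidableEq α] : List α → List α → ℕ
  | a :: s, b :: t => if a = b then lcp s t + 1 else 0
  | _, _ => 0

section Aux
variable {α : Type*}

theorem lcp_comm [DecidableEq α] : ∀ U V : List α, lcp U V = lcp V U
  | [], [] => rfl
  | [], _ :: _ => rfl
  | _ :: _, [] => rfl
  | a :: s, b :: t => by
      by_cases h : a = b
      · subst h; simp [lcp, lcp_comm s t]
      · simp [lcp, h, Ne.symm h]

theorem lcp_le_length [DecidableEq α] : ∀ U V : List α, lcp U V ≤ U.length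
  | [], _ => by simp [lcp]
  | _ :: _, [] => by simp [lcp]
  | a :: s, b :: t => by
      by_cases h : a = b
      · simp [lcp, h, Nat.succ_le_succ (lcp_le_length s t)]
      · simp [lcp, h]

theorem length_le_lcp [DecidableEq α] {P U V : List α} (hU : P <+: U) (hV : P <+: V) :
    P.length ≤ lcp U V := by
  induction P generalizing U V with
  | nil => simp
  | cons p P ih =>
    obtain ⟨u, rfl⟩ := hU
    obtain ⟨v, rfl⟩ := hV
    simp only [List.cons_append, lcp, if_pos rfl, List.length_cons]
    exact Nat.succ_le_succ (ih ⟨u, rfl⟩ ⟨v, rfl⟩)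

theorem prefix_of_le_lcp [DecidableEq α] {P U V : List α} (hU : P <+: U)
    (h : P.length ≤ lcp U V) : P <+: V := by
  induction P generalizing U V with
  | nil => exact List.nil_prefix
  | cons p P ih =>
    cases U with
    | nil => simp at hU
    | cons a s =>
      cases V with
      | nil => simp [lcp] at h
      | cons b t =>
        obtain ⟨rfl, hPs⟩ := List.cons_prefix_cons.mp hU
        by_cases hab : p = b
        · subst hab
          simp only [lcp, if_pos rfl, List.length_cons] at h
          exact List.cons_prefix_cons.mpr ⟨rfl, ih hPs (Nat.le_of_succ_le_succ h)⟩
        · simp [lcp, hab] at h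

theorem take_lcp_prefix [DecidableEq α] : ∀ U V : List α, U.take (lcp U V) <+: V
  | [], _ => by simp
  | _ :: _, [] => by simp [lcp]
  | a :: s, b :: t => by
      by_cases h : a = b
      · subst h
        simp only [lcp, if_pos rfl, List.take_succ_cons]
        exact List.cons_prefix_cons.mpr ⟨rfl, take_lcp_prefix s t⟩
      · simp [lcp, h]

theorem cons_le_cons_iff [LinearOrder α] {a b : α} {s t : List α} :
    a :: s ≤ b :: t ↔ a < b ∨ (a = b ∧ s ≤ t) := by
  rw [le_iff_lt_or_eq, le_iff_lt_or_eq]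
  constructor
  · rintro (h | h)
    · cases h with
      | cons h => exact Or.inr ⟨rfl, Or.inl h⟩
      | rel h => exact Or.inl h
    · injection h with h1 h2; exact Or.inr ⟨h1, Or.inr h2⟩
  · rintro (h | ⟨rfl, (h | rfl)⟩)
    · exact Or.inl (List.Lex.rel h)
    · exact Or.inl (List.Lex.cons h)
    · exact Or.inr rfl

theorem sandwich [LinearOrder α] : ∀ {P U V W : List α},
    P <+: U → P <+: W → U ≤ V → V ≤ W → P <+: V := by
  intro P
  induction P with
  | nil => intros; exact List.nil_prefix
  | cons p P ih =>
    intro U V W hU hW hUV hVW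
    cases U with
    | nil => simp at hU
    | cons a s =>
      cases W with
      | nil => simp at hW
      | cons c w =>
        obtain ⟨rfl, hPs⟩ := List.cons_prefix_cons.mp hU
        obtain ⟨rfl, hPw⟩ := List.cons_prefix_cons.mp hW
        cases V with
        | nil =>
          rcases le_iff_lt_or_eq.mp hUV with h | h
          · exact absurd h (List.not_lex_nil)
          · simp at h
        | cons b t =>
          rcases cons_le_cons_iff.mp hUV with h1 | ⟨rfl, h1⟩
          · rcases cons_le_cons_iff.mp hVW with h2 | ⟨rfl, h2⟩
            · exact absurd (h1.trans h2) (lt_irrefl _)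
            · exact absurd h1 (lt_irrefl _)
          · rcases cons_le_cons_iff.mp hVW with h2 | ⟨-, h2⟩
            · exact absurd h2 (lt_irrefl _)
            · exact List.cons_prefix_cons.mpr ⟨rfl, ih hPs hPw h1 h2⟩

theorem lcp_mono_left [LinearOrder α] {U V W : List α} (hUV : U ≤ V) (hVW : V ≤ W) :
    lcp U W ≤ lcp U V := by
  have hP : U.take (lcp U W) <+: V :=
    sandwich (List.take_prefix _ _) (take_lcp_prefix U W) hUV hVW
  have := length_le_lcp (List.take_prefix (lcp U W) U) hP
  rwa [List.length_take, min_eq_left (lcp_le_length U W)] at this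

theorem lcp_mono_right [LinearOrder α] {U V W : List α} (hUV : U ≤ V) (hVW : V ≤ W) :
    lcp U W ≤ lcp V W := by
  have hP : U.take (lcp U W) <+: V :=
    sandwich (List.take_prefix _ _) (take_lcp_prefix U W) hUV hVW
  have := length_le_lcp hP (take_lcp_prefix U W)
  rwa [List.length_take, min_eq_left (lcp_le_length U W)] at this

end Aux

theorem shortest_unique_prefix_formula {α : Type*} [LinearOrder α]
    (N : ℕ) (hN : 2 ≤ N) (S : ℕ → List α)
    (hsorted : ∀ i j, i ≤ j → j < N → S i ≤ S j)
    (L : ℕ → ℕ) (hL0 : L 0 = 0) (hLN : L N = 0)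
    (hL : ∀ i, 1 ≤ i → i ≤ N - 1 → L i = lcp (S (i - 1)) (S i))
    (M : ℕ → ℕ) (hM : ∀ i < N, M i = max (L i) (L (i + 1))) :
    -- (a) the largest LCP of S[i] with any other list element is M[i]
    (∀ i < N,
      (((Finset.range N).erase i).sup (fun j => lcp (S i) (S j))) = M i) ∧
    -- (b) P is a prefix of exactly one list element iff it is a prefix of
    -- some S[i] with M[i] < |P| ≤ |S[i]|
    (∀ P : List α,
      (∃! i, i < N ∧ P <+: S i) ↔
        ∃ i < N, P <+: S i ∧ M i < P.length ∧ P.length ≤ (S i).length) ∧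
    -- consequently: existence of a unique prefix, and its minimal length
    ((∃ P : List α, ∃! i, i < N ∧ P <+: S i) ↔ ∃ i < N, M i < (S i).length) ∧
    ((∃ i < N, M i < (S i).length) →
      sInf {l | ∃ P : List α, l = P.length ∧ ∃! i, i < N ∧ P <+: S i} =
        sInf {m | ∃ i, i < N ∧ M i < (S i).length ∧ m = M i + 1}) := by
  have key : ∀ i j, i < N → j < N → j ≠ i → lcp (S i) (S j) ≤ M i := by
    intro i j hi hj hne
    rcases lt_or_gt_of_ne hne with hji | hij
    · have h2 : lcp (S j) (S i) ≤ lcp (S (i - 1)) (S i) :=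
        lcp_mono_right (hsorted j (i - 1) (by omega) (by omega))
          (hsorted (i - 1) i (by omega) hi)
      have h3 : L i = lcp (S (i - 1)) (S i) := hL i (by omega) (by omega)
      rw [hM i hi, lcp_comm]
      exact le_trans (h2.trans_eq h3.symm) (le_max_left _ _)
    · have h2 : lcp (S i) (S j) ≤ lcp (S i) (S (i + 1)) :=
        lcp_mono_left (hsorted i (i + 1) (by omega) (by omega))
          (hsorted (i + 1) j (by omega) hj)
      have h3 : L (i + 1) = lcp (S i) (S (i + 1)) := by
        simpa using hL (i + 1) (by omega) (by omega)
      rw [hM i hi]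
      exact le_trans (h2.trans_eq h3.symm) (le_max_right _ _)
  have parta : ∀ i < N, (((Finset.range N).erase i).sup fun j => lcp (S i) (S j)) = M i := by
    intro i hi
    apply le_antisymm
    · apply Finset.sup_le
      intro j hj
      rw [Finset.mem_erase, Finset.mem_range] at hj
      exact key i j hi hj.2 hj.1
    · rw [hM i hi]
      apply max_le
      · rcases Nat.eq_zero_or_pos i with rfl | hpos
        · simp [hL0]
        · have h3 : L i = lcp (S (i - 1)) (S i) := hL i hpos (by omega)
          have hmem : i - 1 ∈ (Finset.range N).erase i := by
            rw [Finset.mem_erase, Finset.mem_range]; omega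
          calc L i = lcp (S i) (S (i - 1)) := by rw [h3, lcp_comm]
            _ ≤ _ := Finset.le_sup (f := fun j => lcp (S i) (S j)) hmem
      · rcases eq_or_lt_of_le (Nat.succ_le_of_lt hi) with heq | hlt
        · rw [show i + 1 = N from heq, hLN]; exact Nat.zero_le _
        · have h3 : L (i + 1) = lcp (S i) (S (i + 1)) := by
            simpa using hL (i + 1) (by omega) (by omega)
          have hmem : i + 1 ∈ (Finset.range N).erase i := by
            rw [Finset.mem_erase, Finset.mem_range]; omega
          exact h3.le.trans (Finset.le_sup (f := fun j => lcp (S i) (S j)) hmem)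
  have partb : ∀ P : List α, (∃! i, i < N ∧ P <+: S i) ↔
      ∃ i < N, P <+: S i ∧ M i < P.length ∧ P.length ≤ (S i).length := by
    intro P
    constructor
    · rintro ⟨i, ⟨hiN, hiP⟩, huniq⟩
      refine ⟨i, hiN, hiP, ?_, hiP.length_le⟩
      have hPne : 0 < P.length := by
        rcases Nat.eq_zero_or_pos P.length with h0 | h
        · exfalso
          have hP0 : P = [] := List.length_eq_zero_iff.mp h0
          have e0 := huniq 0 ⟨by omega, by simp [hP0]⟩
          have e1 := huniq 1 ⟨by omega, by simp [hP0]⟩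
          omega
        · exact h
      by_contra hcon
      push_neg at hcon
      rw [hM i hiN] at hcon
      rcases le_max_iff.mp hcon with hle | hle
      · rcases Nat.eq_zero_or_pos i with rfl | hpos
        · rw [hL0] at hle; omega
        · have h3 : L i = lcp (S (i - 1)) (S i) := hL i hpos (by omega)
          have hPj : P <+: S (i - 1) := by
            apply prefix_of_le_lcp hiP
            rw [lcp_comm, ← h3]; exact hle
          have := huniq (i - 1) ⟨by omega, hPj⟩
          omega
      · rcases eq_or_lt_of_le (Nat.succ_le_of_lt hiN) with heq | hlt
        · rw [show i + 1 = N from heq, hLN] at hle; omega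
        · have h3 : L (i + 1) = lcp (S i) (S (i + 1)) := by
            simpa using hL (i + 1) (by omega) (by omega)
          have hPj : P <+: S (i + 1) :=
            prefix_of_le_lcp hiP (by rw [← h3]; exact hle)
          have := huniq (i + 1) ⟨hlt, hPj⟩
          omega
    · rintro ⟨i, hiN, hiP, hMi, _⟩
      refine ⟨i, ⟨hiN, hiP⟩, ?_⟩
      rintro j ⟨hjN, hjP⟩
      by_contra hne
      have h1 : P.length ≤ lcp (S i) (S j) := length_le_lcp hiP hjP
      have h2 := key i j hiN hjN hne
      omega
  have partc : (∃ P : List α, ∃! i, i < N ∧ P <+: S i) ↔ ∃ i < N, M i < (S i).length := by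
    constructor
    · rintro ⟨P, hP⟩
      obtain ⟨i, hiN, _, hMi, hlen⟩ := (partb P).mp hP
      exact ⟨i, hiN, lt_of_lt_of_le hMi hlen⟩
    · rintro ⟨i, hiN, h⟩
      refine ⟨(S i).take (M i + 1),
        (partb _).mpr ⟨i, hiN, List.take_prefix _ _, ?_, ?_⟩⟩ <;>
        rw [List.length_take] <;> omega
  refine ⟨parta, partb, partc, ?_⟩
  intro hex
  have hBne : Set.Nonempty {m | ∃ i, i < N ∧ M i < (S i).length ∧ m = M i + 1} := by
    obtain ⟨i, hiN, h⟩ := hex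
    exact ⟨M i + 1, i, hiN, h, rfl⟩
  have hBA : {m | ∃ i, i < N ∧ M i < (S i).length ∧ m = M i + 1} ⊆
      {l | ∃ P : List α, l = P.length ∧ ∃! i, i < N ∧ P <+: S i} := by
    rintro m ⟨i, hiN, hlt, rfl⟩
    refine ⟨(S i).take (M i + 1), ?_,
      (partb _).mpr ⟨i, hiN, List.take_prefix _ _, ?_, ?_⟩⟩ <;>
      rw [List.length_take] <;> omega
  have hdom : ∀ l ∈ {l | ∃ P : List α, l = P.length ∧ ∃! i, i < N ∧ P <+: S i},
      ∃ m ∈ {m | ∃ i, i < N ∧ M i < (S i).length ∧ m = M i + 1}, m ≤ l := by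
    rintro l ⟨P, rfl, hP⟩
    obtain ⟨i, hiN, _, hMi, hlen⟩ := (partb P).mp hP
    exact ⟨M i + 1, ⟨i, hiN, lt_of_lt_of_le hMi hlen, rfl⟩, hMi⟩
  have hAne : Set.Nonempty {l | ∃ P : List α, l = P.length ∧ ∃! i, i < N ∧ P <+: S i} :=
    ⟨_, hBA hBne.some_mem⟩
  apply le_antisymm
  · exact Nat.sInf_le (hBA (Nat.sInf_mem hBne))
  · obtain ⟨m, hmB, hm⟩ := hdom _ (Nat.sInf_mem hAne)
    exact le_trans (Nat.sInf_le hmB) hm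
end

section
/- Let λ be a Lyndon word with r = |λ|, and let F = run(λ,e,α,β) and F' = run(λ,e',α',β') with e, e' ≥ 2, 0 ≤ α, β, α', β' < r. If e = e' − 2, then F is a substring of F' (|Occ(F,F')| ≥ 1), and F is a unique substring of F' (|Occ(F,F')| = 1) if and only if α > α' and β > β'. -/
/-- `e`-fold concatenation of the string `l` with itself. -/
def listPow {α : Type*} (l : List α) : ℕ → List α
  | 0 => []
  | n + 1 => l ++ listPow l n

/-- `run λ e α β = P · λ^e · T` where `P` is the suffix of `λ` of length `α`
and `T` is the prefix of `λ` of length `β`. -/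
def runWord {α : Type*} (lam : List α) (e a b : ℕ) : List α :=
  lam.drop (lam.length - a) ++ listPow lam e ++ lam.take b

/-- The set of occurrences of `F` in `F'`: positions `i` with
`0 ≤ i ≤ |F'| − |F|` and `F = F'[i..i+|F|)`. -/
def occ {α : Type*} [DecidableEq α] (F F' : List α) : Finset ℕ :=
  (Finset.range (F'.length + 1)).filter
    (fun i => i + F.length ≤ F'.length ∧ (F'.drop i).take F.length = F)

/-- A Lyndon word: a nonempty string lexicographically strictly smaller than
every proper nonempty suffix of itself. -/
def IsLyndon {α : Type*} [LinearOrder α] (l : List α) : Prop :=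
  l ≠ [] ∧ ∀ i, 0 < i → i < l.length → l < l.drop i

section aux
variable {α : Type*}

/-- total cyclic indexing -/
def cyc (l : List α) (h : l ≠ []) (k : ℕ) : α := l.getD (k % l.length) (l.head h)

theorem cyc_congr (l : List α) (h : l ≠ []) {x y : ℕ} (hxy : x ≡ y [MOD l.length]) :
    cyc l h x = cyc l h y := by
  have h' : x % l.length = y % l.length := hxy
  unfold cyc; rw [h']

theorem cyc_eq_getElem (l : List α) (h : l ≠ []) (k : ℕ) (hk : k < l.length) :
    cyc l h k = l[k] := by
  unfold cyc; rw [Nat.mod_eq_of_lt hk]; exact List.getD_eq_getElem l _ hk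

theorem listPow_length (l : List α) (n : ℕ) : (listPow l n).length = n * l.length := by
  induction n with
  | zero => simp [listPow]
  | succ n ih => simp [listPow, ih, Nat.succ_mul, Nat.add_comm]

theorem listPow_getElem (l : List α) (h : l ≠ []) (n i : ℕ) (hi : i < n * l.length) :
    (listPow l n)[i]'(by rw [listPow_length]; exact hi) = cyc l h i := by
  have hl : 0 < l.length := List.length_pos_iff.mpr h
  induction n generalizing i with
  | zero => simp at hi
  | succ n ih =>
    rw [Nat.succ_mul] at hi
    show (l ++ listPow l n)[i]'(by simp [listPow_length]; omega) = _
    by_cases hc : i < l.length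
    · rw [List.getElem_append_left hc, cyc_eq_getElem l h i hc]
    · push_neg at hc
      have h2 : i - l.length < n * l.length := by omega
      rw [List.getElem_append_right (by simpa using hc), ih (i - l.length) h2]
      apply cyc_congr
      show (i - l.length) % l.length = i % l.length
      conv_rhs => rw [show i = (i - l.length) + l.length by omega]
      rw [Nat.add_mod_right]
end aux

theorem runWord_length (lam : List α) (e a b : ℕ) (ha : a ≤ lam.length) (hb : b ≤ lam.length) :
    (runWord lam e a b).length = a + e * lam.length + b := by
  simp [runWord, listPow_length]; omega

theorem runWord_getElem (lam : List α) (h : lam ≠ []) (e a b : ℕ)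
    (ha : a ≤ lam.length) (hb : b ≤ lam.length) (i : ℕ) (hi : i < a + e * lam.length + b) :
    (runWord lam e a b)[i]'(by rw [runWord_length lam e a b ha hb]; exact hi)
      = cyc lam h (i + (lam.length - a)) := by
  have hl : 0 < lam.length := List.length_pos_iff.mpr h
  show (lam.drop (lam.length - a) ++ listPow lam e ++ lam.take b)[i]'(by simp [listPow_length]; omega) = _
  by_cases h1 : i < a + e * lam.length
  · rw [List.getElem_append_left (by simp [listPow_length]; omega)]
    by_cases h2 : i < a
    · rw [List.getElem_append_left (by simp; omega)]
      rw [List.getElem_drop]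
      rw [cyc_eq_getElem lam h _ (by omega)]
      congr 1
      omega
    · push_neg at h2
      rw [List.getElem_append_right (by simp; omega)]
      have h3 : i - (lam.drop (lam.length - a)).length = i - a := by simp; omega
      rw [listPow_getElem lam h e _ (by simp; omega)]
      · apply cyc_congr
        show (i - (lam.drop (lam.length - a)).length) % lam.length = (i + (lam.length - a)) % lam.length
        rw [h3]
        conv_rhs => rw [show i + (lam.length - a) = (i - a) + lam.length by omega]
        rw [Nat.add_mod_right]
  · push_neg at h1
    rw [List.getElem_append_right (by simp [listPow_length]; omega)]
    have h4 : i - (lam.drop (lam.length - a) ++ listPow lam e).length = i - (a + e * lam.length) := by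
      simp [listPow_length]; omega
    rw [List.getElem_take]
    rw [← cyc_eq_getElem lam h (i - (lam.drop (lam.length - a) ++ listPow lam e).length)
      (by simp [listPow_length]; omega)]
    apply cyc_congr
    show (i - (lam.drop (lam.length - a) ++ listPow lam e).length) % lam.length
      = (i + (lam.length - a)) % lam.length
    rw [h4]
    have key : i + (lam.length - a) = (i - (a + e * lam.length)) + e * lam.length + lam.length := by
      omega
    rw [key, Nat.add_mod_right, Nat.add_mul_mod_self_right]

theorem prefix_lt {α : Type*} [LinearOrder α] (p l : List α) (h : p <+: l)
    (hlen : p.length < l.length) : p < l := by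
  show List.Lex (· < ·) p l
  obtain ⟨t, rfl⟩ := h
  induction p with
  | nil =>
    cases t with
    | nil => simp at hlen
    | cons x xs => exact List.Lex.nil
  | cons x xs ih => exact List.Lex.cons (ih (by simp at hlen ⊢; omega))

theorem lyndon_rotate {α : Type*} [LinearOrder α] (l : List α) (hlyn : IsLyndon l)
    (d : ℕ) (hd : 0 < d) (hdr : d < l.length) : l.rotate d ≠ l := by
  intro heq
  have hpre : l.drop d <+: l := ⟨l.take d, by
    rw [← List.rotate_eq_drop_append_take (le_of_lt hdr)]; exact heq⟩
  have h1 : l < l.drop d := hlyn.2 d hd hdr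
  have h2 : l.drop d < l := prefix_lt _ _ hpre (by simp; omega)
  exact absurd (h1.trans h2) (lt_irrefl l)

theorem align {α : Type*} [LinearOrder α] (l : List α) (hlyn : IsLyndon l) (c1 c2 : ℕ)
    (h : ∀ k, k < l.length → cyc l hlyn.1 (k + c1) = cyc l hlyn.1 (k + c2)) :
    c1 ≡ c2 [MOD l.length] := by
  have hne := hlyn.1
  have hr : 0 < l.length := List.length_pos_iff.mpr hne
  set r := l.length with hrdef
  set u := c1 % r with hu
  have hur : u < r := Nat.mod_lt _ hr
  set d := ((r - u) + c2) % r with hd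
  have hdr : d < r := Nat.mod_lt _ hr
  -- the key claim: cyc is d-periodic
  have claim : ∀ j, j < r → cyc l hne (j + d) = cyc l hne j := by
    intro j hj
    have hk := h ((j + (r - u)) % r) (Nat.mod_lt _ hr)
    have e1 : (j + (r - u)) % r + c1 ≡ j [MOD r] := by
      calc (j + (r - u)) % r + c1 ≡ j + (r - u) + c1 [MOD r] :=
            (Nat.mod_modEq _ r).add_right c1
        _ ≡ j + (r - u) + u [MOD r] := Nat.ModEq.add_left _ (Nat.mod_modEq c1 r).symm
        _ = j + r := by omega
        _ ≡ j [MOD r] := Nat.add_mod_right j r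
    have e2 : (j + (r - u)) % r + c2 ≡ j + d [MOD r] := by
      calc (j + (r - u)) % r + c2 ≡ j + (r - u) + c2 [MOD r] :=
            (Nat.mod_modEq _ r).add_right c2
        _ = j + ((r - u) + c2) := by omega
        _ ≡ j + d [MOD r] := Nat.ModEq.add_left j (Nat.mod_modEq _ r).symm
    calc cyc l hne (j + d) = cyc l hne ((j + (r - u)) % r + c2) := (cyc_congr l hne e2).symm
      _ = cyc l hne ((j + (r - u)) % r + c1) := hk.symm
      _ = cyc l hne j := cyc_congr l hne e1
  -- d must be 0
  have hd0 : d = 0 := by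
    by_contra hd0
    apply lyndon_rotate l hlyn d (Nat.pos_of_ne_zero hd0) hdr
    apply List.ext_getElem (by simp)
    intro j hj hj'
    rw [List.getElem_rotate]
    have : l[(j + d) % l.length]'(Nat.mod_lt _ hr) = l[j]'hj' := by
      rw [← cyc_eq_getElem l hne _ (Nat.mod_lt _ hr), ← cyc_eq_getElem l hne j hj']
      rw [cyc_congr l hne (Nat.mod_modEq (j + d) r)]
      exact claim j hj'
    convert this using 2
  -- from d = 0 deduce c1 ≡ c2
  have h0 : ((r - u) + c2) % r = 0 := hd0
  show c1 % r = c2 % r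
  have : (c2 + (r - u)) + u ≡ 0 + u [MOD r] := Nat.ModEq.add_right u (by
    show (c2 + (r - u)) % r = 0 % r
    simpa [Nat.add_comm] using h0)
  have h2 : c2 + r ≡ u [MOD r] := by
    have e3 : c2 + (r - u) + u = c2 + r := by omega
    simpa [e3] using this
  have h3 : c2 ≡ u [MOD r] := (Nat.ModEq.symm (Nat.add_mod_right c2 r)).trans h2
  have h4 : u % r = u := Nat.mod_eq_of_lt hur
  have h5 : c2 % r = u % r := h3
  exact (h5.trans h4).symm

theorem run_substring_case_sub2 {α : Type*} [LinearOrder α]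
    (lam : List α) (hlyn : IsLyndon lam) (r : ℕ) (hr : r = lam.length)
    (e e' a b a' b' : ℕ) (he : 2 ≤ e) (he' : 2 ≤ e')
    (ha : a < r) (hb : b < r) (ha' : a' < r) (hb' : b' < r)
    (hcase : e + 2 = e') :
    1 ≤ (occ (runWord lam e a b) (runWord lam e' a' b')).card ∧
    ((occ (runWord lam e a b) (runWord lam e' a' b')).card = 1 ↔
      a' < a ∧ b' < b) := by
  subst hr
  subst hcase
  have hne := hlyn.1
  have hr0 : 0 < lam.length := List.length_pos_iff.mpr hne
  have hFlen : (runWord lam e a b).length = a + e * lam.length + b :=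
    runWord_length lam e a b ha.le hb.le
  have hF'len : (runWord lam (e+2) a' b').length = a' + (e+2) * lam.length + b' :=
    runWord_length lam (e+2) a' b' ha'.le hb'.le
  have hrr : (e+2) * lam.length = e * lam.length + 2 * lam.length := by ring
  have hge2 : 2 * lam.length ≤ e * lam.length := Nat.mul_le_mul_right lam.length he
  obtain ⟨c, hcdef⟩ : ∃ c, c = ((lam.length - a) + a') % lam.length := ⟨_, rfl⟩
  have hcr : c < lam.length := hcdef ▸ Nat.mod_lt _ hr0
  have hcle : c ≤ (lam.length - a) + a' := hcdef ▸ Nat.mod_le _ _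
  -- membership characterization
  have hmem : ∀ i : ℕ, i ∈ occ (runWord lam e a b) (runWord lam (e+2) a' b') ↔
      (i + (runWord lam e a b).length ≤ (runWord lam (e+2) a' b').length ∧
        i % lam.length = c) := by
    intro i
    unfold occ
    simp only [Finset.mem_filter, Finset.mem_range]
    constructor
    · rintro ⟨-, hle, heq⟩
      refine ⟨hle, ?_⟩
      have hpt : ∀ k, k < lam.length →
          cyc lam hne (k + (i + (lam.length - a'))) = cyc lam hne (k + (lam.length - a)) := by
        intro k hk
        have hkF : k < (runWord lam e a b).length := by rw [hFlen]; omega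
        have hikF' : i + k < (runWord lam (e+2) a' b').length := by omega
        have h0 := List.getElem_of_eq heq
          (show k < (((runWord lam (e+2) a' b').drop i).take (runWord lam e a b).length).length
            from by rw [List.length_take, List.length_drop]; omega)
        rw [List.getElem_take, List.getElem_drop] at h0
        rw [runWord_getElem lam hne e a b ha.le hb.le k
              (by have := hkF; rw [hFlen] at this; omega),
            runWord_getElem lam hne (e+2) a' b' ha'.le hb'.le (i+k)
              (by have := hikF'; rw [hF'len] at this; omega)] at h0
        rw [show k + (i + (lam.length - a')) = i + k + (lam.length - a') by omega]
        exact h0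
      have halign : i + (lam.length - a') ≡ (lam.length - a) [MOD lam.length] :=
        align lam hlyn (i + (lam.length - a')) (lam.length - a) hpt
      have h5 : (i + (lam.length - a')) + a' ≡ (lam.length - a) + a' [MOD lam.length] :=
        halign.add_right a'
      have h5' : (i + lam.length) % lam.length = ((lam.length - a) + a') % lam.length := by
        rw [show i + lam.length = (i + (lam.length - a')) + a' by omega]; exact h5
      rw [Nat.add_mod_right] at h5'
      rw [hcdef]
      exact h5'
    · rintro ⟨hle, hmod⟩
      have hF0 : 0 < (runWord lam e a b).length := by rw [hFlen]; omega
      refine ⟨by omega, hle, ?_⟩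
      apply List.ext_getElem
      · rw [List.length_take, List.length_drop]; omega
      · intro k h1 h2
        rw [List.getElem_take, List.getElem_drop]
        have hikF' : i + k < (runWord lam (e+2) a' b').length := by omega
        rw [runWord_getElem lam hne (e+2) a' b' ha'.le hb'.le (i+k)
              (by have := hikF'; rw [hF'len] at this; omega),
            runWord_getElem lam hne e a b ha.le hb.le k
              (by have := h2; rw [hFlen] at this; omega)]
        apply cyc_congr
        have hm : i ≡ (lam.length - a) + a' [MOD lam.length] := by
          show i % lam.length = ((lam.length - a) + a') % lam.length
          rw [hmod, hcdef]
        calc i + k + (lam.length - a')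
            ≡ ((lam.length - a) + a') + k + (lam.length - a') [MOD lam.length] :=
              (hm.add_right k).add_right (lam.length - a')
          _ = (k + (lam.length - a)) + lam.length := by omega
          _ ≡ k + (lam.length - a) [MOD lam.length] := Nat.add_mod_right _ lam.length
  -- c is always an occurrence
  have hcmem : c ∈ occ (runWord lam e a b) (runWord lam (e+2) a' b') :=
    (hmem c).mpr ⟨by rw [hFlen, hF'len]; omega,
      by rw [Nat.mod_eq_of_lt hcr]⟩
  constructor
  · exact Nat.one_le_iff_ne_zero.mpr (Finset.card_ne_zero_of_mem hcmem)
  constructor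
  · intro h1
    by_contra hcon
    push_neg at hcon
    have h2 : c + lam.length ∈ occ (runWord lam e a b) (runWord lam (e+2) a' b') := by
      refine (hmem (c + lam.length)).mpr
        ⟨?_, by rw [Nat.add_mod_right]; exact Nat.mod_eq_of_lt hcr⟩
      rw [hFlen, hF'len]
      rcases le_or_gt a a' with hca | hca
      · have hc1 : c = a' - a := by
          rw [hcdef, show (lam.length - a) + a' = (a' - a) + lam.length by omega,
            Nat.add_mod_right]
          exact Nat.mod_eq_of_lt (by omega)
        omega
      · have hc2 : c = (lam.length - a) + a' := by
          rw [hcdef]; exact Nat.mod_eq_of_lt (by omega)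
        have hbb : b ≤ b' := hcon hca
        omega
    have : 1 < (occ (runWord lam e a b) (runWord lam (e+2) a' b')).card :=
      Finset.one_lt_card.mpr ⟨c, hcmem, c + lam.length, h2, by omega⟩
    omega
  · rintro ⟨haa, hbb⟩
    have hc2 : c = (lam.length - a) + a' := by
      rw [hcdef]; exact Nat.mod_eq_of_lt (by omega)
    have hsing : occ (runWord lam e a b) (runWord lam (e+2) a' b') = {c} := by
      apply Finset.eq_singleton_iff_unique_mem.mpr ⟨hcmem, ?_⟩
      intro i hi
      rw [hmem i] at hi
      obtain ⟨hle, hmod⟩ := hi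
      have hlt : i < c + lam.length := by rw [hFlen, hF'len] at hle; omega
      have hdm := Nat.div_add_mod i lam.length
      rw [hmod] at hdm
      rcases Nat.eq_zero_or_pos (i / lam.length) with hq | hq
      · rw [hq] at hdm; omega
      · have : lam.length * 1 ≤ lam.length * (i / lam.length) :=
          Nat.mul_le_mul_left lam.length hq
        omega
    rw [hsing, Finset.card_singleton]
end
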